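/- Let X be a Banach space, L_N and L generators of C^0 semigroups T_N(t), T(t) all satisfying ‖T_N(t)‖, ‖T(t)‖ ≤ Me^{ωt}. Suppose for some λ with Re λ > ω and every x ∈ X, ‖(I-λL_N)^{-1}x - (I-λL)^{-1}x‖ → 0 as N → ∞. Then for every x ∈ X and t ≥ 0, ‖T_N(t)x - T(t)x‖ → 0, uniformly on bounded t-intervals. -/

import Mathlib

/-!
On vectors `x = R' (R' y)` the semigroups can be compared through the identity
`R_N T(t) R' y - T_N(t) R_N R' y = λ⁻¹ ∫₀ᵗ T_N(t - s) (R' - R_N) T(s) y ds`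
(differentiate `s ↦ T_N(t - s) R_N T(s) R' y`). By Banach–Steinhaus the strongly convergent
`R_N` converge uniformly on the compact orbits `{T(s) z : s ∈ [0, b]}`, so the right side, and
hence `T_N(t) x - T(t) x`, tends to `0` uniformly on `[0, b]`. Such `x` are dense, since `R'`
maps `X` onto the dense domain of the generator, and the set of `x` for which the convergence
holds is closed thanks to the common bound `‖T_N(t)‖, ‖T(t)‖ ≤ M e^{|ω| b}`.
-/

open Set

/-- A `C⁰` semigroup `T(t)` on `X` with growth bound `‖T(t)‖ ≤ M e^{ωt}`,
together with its infinitesimal generator `gen`, defined on its (maximal)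
domain `dom`. -/
structure C0Semigroup (X : Type*) [NormedAddCommGroup X] [NormedSpace ℝ X]
    (M ω : ℝ) where
  T : ℝ → X →L[ℝ] X
  map_zero : T 0 = 1
  map_add : ∀ s t : ℝ, 0 ≤ s → 0 ≤ t → T (s + t) = T s ∘L T t
  strong_cont : ∀ x : X, ContinuousOn (fun t => T t x) (Ici 0)
  growth : ∀ t : ℝ, 0 ≤ t → ‖T t‖ ≤ M * Real.exp (ω * t)
  dom : Submodule ℝ X
  gen : dom →ₗ[ℝ] X
  has_gen : ∀ x : dom, HasDerivWithinAt (fun t => T t (x : X)) (gen x) (Ici 0) 0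
  dom_maximal : ∀ x y : X,
    HasDerivWithinAt (fun t => T t x) y (Ici 0) 0 → x ∈ dom

/-- `R` is the resolvent `(I - λ·gen)⁻¹` of the generator of `S`. -/
def IsResolvent {X : Type*} [NormedAddCommGroup X] [NormedSpace ℝ X]
    {M ω : ℝ} (S : C0Semigroup X M ω) (lam : ℝ) (R : X →L[ℝ] X) : Prop :=
  (∀ x : S.dom, R ((x : X) - lam • S.gen x) = (x : X)) ∧
    ∀ y : X, ∃ h : R y ∈ S.dom, R y - lam • S.gen ⟨R y, h⟩ = y

open Filter Topology

section OperatorFamilies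

variable {𝕜 E F : Type*} [NontriviallyNormedField 𝕜] [NormedAddCommGroup E] [NormedSpace 𝕜 E]
  [NormedAddCommGroup F] [NormedSpace 𝕜 F]

theorem ContinuousLinearMap.tendstoUniformlyOn_of_tendsto [CompleteSpace E]
    {A : ℕ → E →L[𝕜] F} {B : E →L[𝕜] F} (hAB : ∀ x, Tendsto (fun n => A n x) atTop (𝓝 (B x)))
    {K : Set E} (hK : IsCompact K) :
    TendstoUniformlyOn (fun n => A n) B atTop K := by
  have hbdd : ∃ C, ∀ n, ‖A n‖ ≤ C := banach_steinhaus fun x => by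
    obtain ⟨C, hC⟩ := (hAB x).norm.bddAbove_range
    exact ⟨C, fun n => hC (mem_range_self n)⟩
  have heq : Equicontinuous ((↑) ∘ A : ℕ → E → F) :=
    ((NormedSpace.equicontinuous_TFAE A).out 5 1).mp hbdd
  have key := EquicontinuousOn.tendsto_uniformOnFun_iff_pi' (𝔖 := {K}) (by simpa using hK)
    (by simpa using heq.equicontinuousOn K) atTop B
  rw [UniformOnFun.tendsto_iff_tendstoUniformlyOn, tendsto_pi_nhds] at key
  exact key.mpr (fun x => hAB x) K rfl

theorem isClosed_setOf_tendstoUniformlyOn_of_norm_le {ι α : Type*} {l : Filter ι}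
    {A : ι → α → E →L[𝕜] F} {B : α → E →L[𝕜] F} {K : Set α} {C : ℝ}
    (hA : ∀ i, ∀ t ∈ K, ‖A i t‖ ≤ C) (hB : ∀ t ∈ K, ‖B t‖ ≤ C) :
    IsClosed {x | TendstoUniformlyOn (fun i t => A i t x) (fun t => B t x) l K} := by
  refine isClosed_of_closure_subset fun x hx => Metric.tendstoUniformlyOn_iff.2 fun ε hε => ?_
  have hδ : 0 < ε / 3 / (|C| + 1) := by positivity
  obtain ⟨x', hx', hxx'⟩ := Metric.mem_closure_iff.1 hx _ hδ
  have hlip : ∀ L : E →L[𝕜] F, ‖L‖ ≤ C → dist (L x) (L x') < ε / 3 := fun L hL =>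
    calc dist (L x) (L x') ≤ ‖L‖ * dist x x' := L.lipschitz.dist_le_mul x x'
      _ ≤ (|C| + 1) * dist x x' := by gcongr; linarith [le_abs_self C]
      _ < (|C| + 1) * (ε / 3 / (|C| + 1)) := by gcongr
      _ = ε / 3 := by field_simp
  filter_upwards [Metric.tendstoUniformlyOn_iff.1 hx' (ε / 3) (by positivity)] with i hi t ht
  calc dist (B t x) (A i t x)
      ≤ dist (B t x) (B t x') + dist (B t x') (A i t x') + dist (A i t x') (A i t x) :=
        dist_triangle4 _ _ _ _
    _ < ε / 3 + ε / 3 + ε / 3 := by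
        gcongr
        · exact hlip _ (hB t ht)
        · exact hi t ht
        · rw [dist_comm]; exact hlip _ (hA i t ht)
    _ = ε := by ring

end OperatorFamilies

theorem tendstoUniformlyOn_zero_of_norm_le {ι α E : Type*} [SeminormedAddCommGroup E]
    {l : Filter ι} {F : ι → α → E} {K : Set α} {g : ι → ℝ}
    (hF : ∀ᶠ i in l, ∀ t ∈ K, ‖F i t‖ ≤ g i) (hg : Tendsto g l (𝓝 0)) :
    TendstoUniformlyOn F 0 l K :=
  Metric.tendstoUniformlyOn_iff.2 fun ε hε => by
    filter_upwards [hF, hg.eventually (gt_mem_nhds hε)] with i hFi hgi t ht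
    simpa [dist_eq_norm'] using (hFi t ht).trans_lt hgi

namespace C0Semigroup

variable {X : Type*} [NormedAddCommGroup X] [NormedSpace ℝ X] {M ω : ℝ} (S : C0Semigroup X M ω)

theorem growth_const_nonneg (S : C0Semigroup X M ω) : 0 ≤ M := by
  simpa using (norm_nonneg _).trans (S.growth 0 le_rfl)

theorem norm_T_le {b t : ℝ} (ht : t ∈ Icc 0 b) : ‖S.T t‖ ≤ M * Real.exp (|ω| * b) := by
  refine (S.growth t ht.1).trans (mul_le_mul_of_nonneg_left ?_ S.growth_const_nonneg)
  exact Real.exp_le_exp.2 <| (mul_le_mul_of_nonneg_right (le_abs_self ω) ht.1).trans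
    (mul_le_mul_of_nonneg_left ht.2 (abs_nonneg ω))

theorem T_comm {s t : ℝ} (hs : 0 ≤ s) (ht : 0 ≤ t) (x : X) :
    S.T s (S.T t x) = S.T t (S.T s x) := by
  rw [← ContinuousLinearMap.comp_apply, ← S.map_add s t hs ht, add_comm, S.map_add t s ht hs,
    ContinuousLinearMap.comp_apply]

theorem tendsto_T_apply {α : Type*} {l : Filter α} {σ : α → ℝ} {v : α → X} {r : ℝ} {x : X}
    (hσ : Tendsto σ l (𝓝 r)) (hσ0 : ∀ᶠ a in l, 0 ≤ σ a) (hr : 0 ≤ r)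
    (hv : Tendsto v l (𝓝 x)) :
    Tendsto (fun a => S.T (σ a) (v a)) l (𝓝 (S.T r x)) := by
  have hfixed : Tendsto (fun a => S.T (σ a) x) l (𝓝 (S.T r x)) :=
    (S.strong_cont x r hr).tendsto.comp (tendsto_nhdsWithin_iff.2 ⟨hσ, hσ0⟩)
  have hmoving : Tendsto (fun a => S.T (σ a) (v a - x)) l (𝓝 0) := by
    have hbound := (tendsto_sub_nhds_zero_iff.2 hv).norm.const_mul (M * Real.exp (|ω| * (r + 1)))
    refine squeeze_zero_norm' ?_ (by simpa using hbound)
    filter_upwards [hσ0, hσ.eventually (eventually_le_nhds (lt_add_one r))] with a h0 h1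
    exact ((S.T (σ a)).le_opNorm _).trans (by gcongr; exact S.norm_T_le ⟨h0, h1⟩)
  simpa [map_sub] using hmoving.add hfixed

theorem slope_T_apply_add {s h : ℝ} (hs : 0 ≤ s) (hh : 0 ≤ h) (x : X) :
    slope (fun r => S.T r x) s (s + h) = S.T s (slope (fun r => S.T r x) 0 h) := by
  simp only [slope_def_module, add_sub_cancel_left, sub_zero, S.map_add s h hs hh, S.map_zero,
    map_smul, map_sub, ContinuousLinearMap.comp_apply, one_apply_eq_self]

theorem tendsto_slope_T_apply_zero (x : S.dom) :
    Tendsto (slope (fun r => S.T r (x : X)) 0) (𝓝[>] 0) (𝓝 (S.gen x)) := by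
  simpa [Ici_sdiff_left] using hasDerivWithinAt_iff_tendsto_slope.1 (S.has_gen x)

theorem hasDerivAt_T_apply (x : S.dom) {t : ℝ} (ht : 0 < t) :
    HasDerivAt (fun s => S.T s (x : X)) (S.T t (S.gen x)) t := by
  rw [hasDerivAt_iff_tendsto_slope, ← nhdsLT_sup_nhdsGT, tendsto_sup]
  constructor
  · have hshift : Tendsto (fun s => t - s) (𝓝[<] t) (𝓝[>] 0) := by
      have := (map_subLeft_nhdsLT (c := t) (a := t)).le
      rwa [sub_self] at this
    have hpos : ∀ᶠ s in 𝓝[<] t, s ∈ Ioo 0 t := Ioo_mem_nhdsLT ht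
    refine (S.tendsto_T_apply (tendsto_id.mono_left nhdsWithin_le_nhds)
      (hpos.mono fun s hs => hs.1.le) ht.le
      ((S.tendsto_slope_T_apply_zero x).comp hshift)).congr' ?_
    filter_upwards [hpos] with s hs
    rw [id, Function.comp_apply, ← S.slope_T_apply_add hs.1.le (sub_nonneg.2 hs.2.le),
      add_sub_cancel, slope_comm]
  · have hshift : Tendsto (fun s => s - t) (𝓝[>] t) (𝓝[>] 0) := by
      have := (map_subRight_nhdsGT (c := t) (a := t)).le
      rwa [sub_self] at this
    refine (((S.T t).continuous.tendsto _).comp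
      ((S.tendsto_slope_T_apply_zero x).comp hshift)).congr' ?_
    filter_upwards [self_mem_nhdsWithin] with s hs
    rw [Function.comp_apply, Function.comp_apply,
      ← S.slope_T_apply_add ht.le (sub_nonneg.2 (le_of_lt hs)), add_sub_cancel]

theorem exists_gen_T_apply (x : S.dom) {s : ℝ} (hs : 0 ≤ s) :
    ∃ h : S.T s (x : X) ∈ S.dom, S.gen ⟨S.T s x, h⟩ = S.T s (S.gen x) := by
  have hderiv : HasDerivWithinAt (fun r => S.T r (S.T s (x : X))) (S.T s (S.gen x)) (Ici 0) 0 :=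
    ((S.T s).hasFDerivAt.comp_hasDerivWithinAt 0 (S.has_gen x)).congr
      (fun r hr => S.T_comm hr hs x) (S.T_comm le_rfl hs x)
  have hmem : S.T s (x : X) ∈ S.dom := S.dom_maximal _ _ hderiv
  exact ⟨hmem, (uniqueDiffOn_Ici 0 0 self_mem_Ici).eq_deriv _ (S.has_gen ⟨_, hmem⟩) hderiv⟩

theorem continuousOn_T_sub_apply {t : ℝ} {v : ℝ → X} (hv : ContinuousOn v (Icc 0 t)) :
    ContinuousOn (fun s => S.T (t - s) (v s)) (Icc 0 t) := fun s hs =>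
  S.tendsto_T_apply ((tendsto_const_nhds.sub tendsto_id).mono_left nhdsWithin_le_nhds)
    (eventually_nhdsWithin_of_forall fun _ hr => sub_nonneg.2 hr.2) (sub_nonneg.2 hs.2) (hv s hs)

theorem hasDerivAt_T_sub_apply {t s : ℝ} (hst : s < t) {w : ℝ → X} {w' : X}
    (hw : HasDerivAt w w' s) (hmem : w s ∈ S.dom) :
    HasDerivAt (fun r => S.T (t - r) (w r)) (S.T (t - s) (w' - S.gen ⟨w s, hmem⟩)) s := by
  have hts : 0 < t - s := sub_pos.2 hst
  have hfrozen : HasDerivAt (fun r => S.T (t - r) (w s)) (-S.T (t - s) (S.gen ⟨w s, hmem⟩)) s := by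
    simpa [Function.comp_def] using
      (S.hasDerivAt_T_apply ⟨w s, hmem⟩ hts).scomp s ((hasDerivAt_id s).const_sub t)
  have hmoving : HasDerivAt (fun r => S.T (t - r) (w r - w s)) (S.T (t - s) w') s := by
    rw [hasDerivAt_iff_tendsto_slope]
    have hσ : Tendsto (fun r => t - r) (𝓝[≠] s) (𝓝 (t - s)) :=
      (tendsto_const_nhds.sub tendsto_id).mono_left nhdsWithin_le_nhds
    refine (S.tendsto_T_apply hσ (hσ.eventually (eventually_ge_nhds hts)) hts.le
      (hasDerivAt_iff_tendsto_slope.1 hw)).congr fun r => ?_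
    rw [slope_def_module, slope_def_module, sub_self, _root_.map_zero, sub_zero, map_smul]
  convert hmoving.add hfrozen using 1
  · ext r
    simp only [Pi.add_apply, map_sub, sub_add_cancel]
  · rw [map_sub, sub_eq_add_neg]

theorem intervalIntegrable_T_apply (x : X) {a b : ℝ} (ha : 0 ≤ a) (hb : 0 ≤ b) :
    IntervalIntegrable (fun s => S.T s x) MeasureTheory.volume a b :=
  ((S.strong_cont x).mono fun _ hs => (le_min ha hb).trans hs.1).intervalIntegrable

theorem hasDerivWithinAt_integral_T_apply [CompleteSpace X] (x : X) {u : ℝ} (hu : 0 ≤ u) :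
    HasDerivWithinAt (fun v => ∫ s in 0..v, S.T s x) (S.T u x) (Ici u) u := by
  have hIoi : Ioi u ⊆ Ici 0 := fun _ hs => hu.trans (le_of_lt hs)
  exact intervalIntegral.integral_hasDerivWithinAt_right (S.intervalIntegrable_T_apply x le_rfl hu)
    ⟨Ioi u, self_mem_nhdsWithin,
      ((S.strong_cont x).mono hIoi).aestronglyMeasurable measurableSet_Ioi⟩
    ((S.strong_cont x u hu).mono hIoi)

theorem T_apply_integral_T_apply [CompleteSpace X] (x : X) {h t : ℝ} (hh : 0 ≤ h) (ht : 0 ≤ t) :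
    S.T t (∫ s in 0..h, S.T s x) = (∫ s in 0..t + h, S.T s x) - ∫ s in 0..t, S.T s x := by
  rw [← (S.T t).intervalIntegral_comp_comm (S.intervalIntegrable_T_apply x le_rfl hh),
    intervalIntegral.integral_interval_sub_left (S.intervalIntegrable_T_apply x le_rfl
      (add_nonneg ht hh)) (S.intervalIntegrable_T_apply x le_rfl ht)]
  have hshift := intervalIntegral.integral_comp_add_left (fun s => S.T s x) t (a := 0) (b := h)
  rw [add_zero] at hshift
  rw [← hshift]
  refine intervalIntegral.integral_congr fun s hs => ?_
  rw [uIcc_of_le hh] at hs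
  simp only [S.map_add t s ht hs.1, ContinuousLinearMap.comp_apply]

theorem integral_T_apply_mem_dom [CompleteSpace X] (x : X) {h : ℝ} (hh : 0 ≤ h) :
    (∫ s in 0..h, S.T s x) ∈ S.dom := by
  have hshift : HasDerivWithinAt (fun t => ∫ s in 0..t + h, S.T s x) (S.T h x) (Ici 0) 0 := by
    simpa [Function.comp_def] using (S.hasDerivWithinAt_integral_T_apply x hh).scomp_of_eq 0
      ((hasDerivAt_id (0 : ℝ)).add_const h).hasDerivWithinAt
      (fun t ht => by simpa using (ht : (0 : ℝ) ≤ t)) (zero_add h).symm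
  have hderiv := hshift.sub (S.hasDerivWithinAt_integral_T_apply x le_rfl)
  rw [S.map_zero, one_apply_eq_self] at hderiv
  refine S.dom_maximal _ _ (hderiv.congr (fun t ht => ?_) ?_)
  · exact S.T_apply_integral_T_apply x hh ht
  · simpa using S.T_apply_integral_T_apply x hh le_rfl

theorem dense_dom [CompleteSpace X] : Dense (S.dom : Set X) := fun x => by
  -- the slopes at `0` of `u ↦ ∫₀ᵘ T s x` are the averages `h⁻¹ ∫₀ʰ T s x ∈ dom`
  have hslope := hasDerivWithinAt_iff_tendsto_slope.1 (S.hasDerivWithinAt_integral_T_apply x le_rfl)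
  rw [S.map_zero, one_apply_eq_self, Ici_sdiff_left] at hslope
  refine mem_closure_of_tendsto hslope (eventually_nhdsWithin_of_forall fun h hh => ?_)
  simpa [slope_def_module] using
    Submodule.smul_mem _ h⁻¹ (S.integral_T_apply_mem_dom x (le_of_lt hh))

theorem tendstoUniformlyOn_T_apply_of_tendsto_zero {ι : Type*} {l : Filter ι}
    (S : ι → C0Semigroup X M ω) {v : ι → X} (hv : Tendsto v l (𝓝 0)) (b : ℝ) :
    TendstoUniformlyOn (fun i t => (S i).T t (v i)) 0 l (Icc 0 b) := by
  refine tendstoUniformlyOn_zero_of_norm_le (g := fun i => M * Real.exp (|ω| * b) * ‖v i‖)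
    (Eventually.of_forall fun i t ht => ?_) (by simpa using hv.norm.const_mul _)
  exact ((S i).T t).le_opNorm _ |>.trans (by gcongr; exact (S i).norm_T_le ht)

theorem tendstoUniformlyOn_integral_T_sub_apply {ι : Type*} {l : Filter ι}
    (S : ι → C0Semigroup X M ω) {b : ℝ} {u : ι → ℝ → X}
    (hu : TendstoUniformlyOn u 0 l (Icc 0 b)) :
    TendstoUniformlyOn (fun i t => ∫ s in 0..t, (S i).T (t - s) (u i s)) 0 l (Icc 0 b) := by
  set C := |M * Real.exp (|ω| * b)| + 1
  have hC : 0 < C := by positivity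
  refine Metric.tendstoUniformlyOn_iff.2 fun ε hε => ?_
  have hδ : 0 < ε / (C * (|b| + 1)) := by positivity
  filter_upwards [Metric.tendstoUniformlyOn_iff.1 hu _ hδ] with i hi t ht
  have hbound : ∀ s ∈ uIoc 0 t, ‖(S i).T (t - s) (u i s)‖ ≤ C * (ε / (C * (|b| + 1))) := by
    intro s hs
    rw [uIoc_of_le ht.1] at hs
    have hus : ‖u i s‖ < ε / (C * (|b| + 1)) := by
      simpa [dist_eq_norm'] using hi s ⟨hs.1.le, hs.2.trans ht.2⟩
    refine ((S i).T (t - s)).le_opNorm _ |>.trans (mul_le_mul ?_ hus.le (norm_nonneg _) hC.le)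
    exact ((S i).norm_T_le ⟨sub_nonneg.2 hs.2, by linarith [hs.1, ht.2]⟩).trans
      ((le_abs_self _).trans (lt_add_one _).le)
  rw [Pi.zero_apply, dist_zero_left]
  calc ‖∫ s in 0..t, (S i).T (t - s) (u i s)‖ ≤ C * (ε / (C * (|b| + 1))) * |t - 0| :=
        intervalIntegral.norm_integral_le_of_norm_le_const hbound
    _ < C * (ε / (C * (|b| + 1))) * (|b| + 1) := by
        gcongr
        rw [sub_zero, abs_of_nonneg ht.1]
        exact ht.2.trans_lt ((le_abs_self b).trans_lt (lt_add_one _))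
    _ = ε := by field_simp

end C0Semigroup

namespace IsResolvent

variable {X : Type*} [NormedAddCommGroup X] [NormedSpace ℝ X] {M ω M' ω' : ℝ}
  {S : C0Semigroup X M ω} {S' : C0Semigroup X M' ω'} {lam : ℝ} {R R' : X →L[ℝ] X}

theorem mem_dom (hR : IsResolvent S lam R) (y : X) : R y ∈ S.dom := (hR.2 y).1

theorem smul_gen_apply (hR : IsResolvent S lam R) (y : X) :
    lam • S.gen ⟨R y, hR.mem_dom y⟩ = R y - y :=
  eq_sub_of_add_eq' (sub_eq_iff_eq_add.1 (hR.2 y).2).symm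

theorem map_T_apply (hR : IsResolvent S lam R) (y : X) {s : ℝ} (hs : 0 ≤ s) :
    R (S.T s y) = S.T s (R y) := by
  obtain ⟨hmem, hgen⟩ := S.exists_gen_T_apply ⟨R y, hR.mem_dom y⟩ hs
  have h := hR.1 ⟨S.T s (R y), hmem⟩
  simp only [hgen] at h
  rwa [← map_smul, ← map_sub, (hR.2 y).2] at h

theorem denseRange [CompleteSpace X] (hR : IsResolvent S lam R) : DenseRange R :=
  S.dense_dom.mono fun x hx => ⟨x - lam • S.gen ⟨x, hx⟩, hR.1 ⟨x, hx⟩⟩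

theorem hasDerivAt_T_sub_resolvent_T_resolvent (hlam : lam ≠ 0) (hR : IsResolvent S lam R)
    (hR' : IsResolvent S' lam R') (y : X) {s t : ℝ} (hs : s ∈ Ioo 0 t) :
    HasDerivAt (fun r => S.T (t - r) (R (S'.T r (R' y))))
      (lam⁻¹ • S.T (t - s) (R' (S'.T s y) - R (S'.T s y))) s := by
  have hw : HasDerivAt (fun r => R (S'.T r (R' y)))
      (R (S'.T s (S'.gen ⟨R' y, hR'.mem_dom y⟩))) s :=
    R.hasFDerivAt.comp_hasDerivAt s (S'.hasDerivAt_T_apply ⟨R' y, hR'.mem_dom y⟩ hs.1)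
  convert S.hasDerivAt_T_sub_apply hs.2 hw (hR.mem_dom _) using 1
  have hgen : lam • (R (S'.T s (S'.gen ⟨R' y, hR'.mem_dom y⟩)) -
      S.gen ⟨_, hR.mem_dom (S'.T s (R' y))⟩) = R' (S'.T s y) - R (S'.T s y) := by
    rw [smul_sub, ← map_smul, ← map_smul, hR'.smul_gen_apply, hR.smul_gen_apply, map_sub,
      map_sub, hR'.map_T_apply y hs.1.le]
    abel
  rw [← hgen, map_smul, smul_smul, inv_mul_cancel₀ hlam, one_smul]

theorem resolvent_T_sub_T_resolvent_eq_integral [CompleteSpace X] (hlam : lam ≠ 0)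
    (hR : IsResolvent S lam R) (hR' : IsResolvent S' lam R') (y : X) {t : ℝ} (ht : 0 ≤ t) :
    R (S'.T t (R' y)) - S.T t (R (R' y)) =
      lam⁻¹ • ∫ s in 0..t, S.T (t - s) (R' (S'.T s y) - R (S'.T s y)) := by
  have hcont : ∀ z : X, ContinuousOn (fun s => S'.T s z) (Icc 0 t) := fun z =>
    (S'.strong_cont z).mono Icc_subset_Ici_self
  have hftc := intervalIntegral.integral_eq_sub_of_hasDeriv_right_of_le ht
    (S.continuousOn_T_sub_apply (R.continuous.comp_continuousOn (hcont (R' y))))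
    (fun s hs => (hR.hasDerivAt_T_sub_resolvent_T_resolvent hlam hR' y hs).hasDerivWithinAt)
    (ContinuousOn.intervalIntegrable (by
      rw [uIcc_of_le ht]
      exact (S.continuousOn_T_sub_apply ((R'.continuous.comp_continuousOn (hcont y)).sub
        (R.continuous.comp_continuousOn (hcont y)))).const_smul _))
  rw [intervalIntegral.integral_smul] at hftc
  simpa [S.map_zero, S'.map_zero] using hftc.symm

end IsResolvent

theorem tendstoUniformlyOn_T_apply_resolvent_resolvent {X : Type*} [NormedAddCommGroup X]
    [NormedSpace ℝ X] [CompleteSpace X] {M ω M' ω' lam : ℝ} {S : ℕ → C0Semigroup X M ω}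
    {S' : C0Semigroup X M' ω'} {R : ℕ → X →L[ℝ] X} {R' : X →L[ℝ] X} (hlam : lam ≠ 0)
    (hR : ∀ N, IsResolvent (S N) lam (R N)) (hR' : IsResolvent S' lam R')
    (hcons : ∀ x, Tendsto (fun N => R N x) atTop (𝓝 (R' x))) (y : X) (b : ℝ) :
    TendstoUniformlyOn (fun N t => (S N).T t (R' (R' y))) (fun t => S'.T t (R' (R' y)))
      atTop (Icc 0 b) := by
  have horbit : ∀ z, TendstoUniformlyOn (fun N s => R N (S'.T s z)) (fun s => R' (S'.T s z))
      atTop (Icc 0 b) := fun z =>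
    ((ContinuousLinearMap.tendstoUniformlyOn_of_tendsto hcons (isCompact_Icc.image_of_continuousOn
      ((S'.strong_cont z).mono Icc_subset_Ici_self))).comp _).mono (subset_preimage_image _ _)
  have hintegrand : TendstoUniformlyOn (fun N s => R' (S'.T s y) - R N (S'.T s y)) 0 atTop
      (Icc 0 b) := Metric.tendstoUniformlyOn_iff.2 fun ε hε => by
    filter_upwards [Metric.tendstoUniformlyOn_iff.1 (horbit y) ε hε] with N hN s hs
    simpa [dist_eq_norm, norm_sub_rev] using hN s hs
  have hduhamel := (uniformContinuous_const_smul lam⁻¹).comp_tendstoUniformlyOn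
    (C0Semigroup.tendstoUniformlyOn_integral_T_sub_apply S hintegrand)
  have hinitial := C0Semigroup.tendstoUniformlyOn_T_apply_of_tendsto_zero S
    (tendsto_sub_nhds_zero_iff.2 ((hcons (R' y)).const_sub (R' (R' y)))) b
  refine (((horbit (R' y)).sub hduhamel).add hinitial).congr ?_ |>.congr_right fun t ht => ?_
  · refine Eventually.of_forall fun N t ht => ?_
    have hid := (hR N).resolvent_T_sub_T_resolvent_eq_integral hlam hR' y ht.1
    simp only [Pi.add_apply, Pi.sub_apply, Function.comp_apply, sub_self, sub_zero]
    rw [← hid, map_sub]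
    abel
  · simp [hR'.map_T_apply _ ht.1]

theorem stmt16_general {X : Type*} [NormedAddCommGroup X] [NormedSpace ℝ X]
    [CompleteSpace X] (M ω : ℝ)
    (S : ℕ → C0Semigroup X M ω) (S' : C0Semigroup X M ω)
    (lam : ℝ) (hlam0 : 0 < lam)
    (R : ℕ → X →L[ℝ] X) (R' : X →L[ℝ] X)
    (hR : ∀ N, IsResolvent (S N) lam (R N)) (hR' : IsResolvent S' lam R')
    (hcons : ∀ x : X, Filter.Tendsto (fun N => R N x) Filter.atTop (nhds (R' x))) :
    ∀ (x : X) (b : ℝ),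
      TendstoUniformlyOn (fun N t => (S N).T t x) (fun t => S'.T t x)
        Filter.atTop (Icc 0 b) := by
  intro x b
  have hclosed := isClosed_setOf_tendstoUniformlyOn_of_norm_le (l := atTop)
    (A := fun N t => (S N).T t) (B := S'.T) (K := Icc 0 b) (fun N t ht => (S N).norm_T_le ht)
    (fun t ht => S'.norm_T_le ht)
  exact (hR'.denseRange.comp hR'.denseRange R'.continuous).induction_on x hclosed
    (tendstoUniformlyOn_T_apply_resolvent_resolvent hlam0.ne' hR hR' hcons · b)

/-- Trotter–Kato approximation theorem: if the semigroups `T_N(t)`, `T(t)` all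
satisfy `‖T_N(t)‖, ‖T(t)‖ ≤ M e^{ωt}` and the resolvents converge strongly,
`(I - λL_N)⁻¹x → (I - λL)⁻¹x` for some `λ > ω`, then `T_N(t)x → T(t)x` for every
`x`, uniformly on bounded intervals of `t`. -/
theorem stmt16 {X : Type*} [NormedAddCommGroup X] [NormedSpace ℝ X]
    [CompleteSpace X] (M ω : ℝ)
    (S : ℕ → C0Semigroup X M ω) (S' : C0Semigroup X M ω)
    (lam : ℝ) (hlam : ω < lam) (hlam0 : 0 < lam)
    (R : ℕ → X →L[ℝ] X) (R' : X →L[ℝ] X)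
    (hR : ∀ N, IsResolvent (S N) lam (R N)) (hR' : IsResolvent S' lam R')
    (hcons : ∀ x : X, Filter.Tendsto (fun N => R N x) Filter.atTop (nhds (R' x))) :
    ∀ (x : X) (b : ℝ),
      TendstoUniformlyOn (fun N t => (S N).T t x) (fun t => S'.T t x)
        Filter.atTop (Icc 0 b) :=
  stmt16_general M ω S S' lam hlam0 R R' hR hR' hcons
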